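/- arXiv:quant-ph/0401165 — 2 statements merged into one kernel-verified Lean document; each statement's English description precedes it below -/
import Mathlib

section
/- For the spin-j coherent state |x̂⟩ with direction x̂ and the thermal operator ρ^th = exp(-β t̂·s) with unit thermal axis t̂, the Q-function satisfies ⟨x̂|ρ^th|x̂⟩ = (cosh(β/2) - (x̂·t̂) sinh(β/2))^{2j}. -/
open Matrix Complex Real

noncomputable section

/-- j = (n-1)/2 for the n-dimensional spin representation. -/
def jr (n : ℕ) : ℝ := ((n : ℝ) - 1) / 2

/-- The magnetic quantum number m = j - k of the k-th basis vector. -/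
def mval (n : ℕ) (k : Fin n) : ℝ := jr n - (k : ℝ)

/-- The spin operator s₃, diagonal in the |j,m⟩ basis. -/
def S3 (n : ℕ) : Matrix (Fin n) (Fin n) ℂ := Matrix.diagonal fun k => (mval n k : ℂ)

/-- Raising operator s₊ = s₁ + i s₂, with s₊|j,m⟩ = √(j(j+1)-m(m+1)) |j,m+1⟩. -/
def Sp (n : ℕ) : Matrix (Fin n) (Fin n) ℂ := fun k' k =>
  if (k' : ℕ) + 1 = (k : ℕ) then
    ((Real.sqrt (jr n * (jr n + 1) - mval n k * (mval n k + 1)) : ℝ) : ℂ) else 0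

/-- Lowering operator s₋ = s₁ - i s₂. -/
def Sm (n : ℕ) : Matrix (Fin n) (Fin n) ℂ := (Sp n)ᴴ

/-- The spin operator s₁. -/
def S1 (n : ℕ) : Matrix (Fin n) (Fin n) ℂ := (1/2 : ℂ) • (Sp n + Sm n)

/-- The spin operator s₂. -/
def S2 (n : ℕ) : Matrix (Fin n) (Fin n) ℂ := (-(Complex.I/2)) • (Sp n - Sm n)

/-- The triple of spin operators (s₁,s₂,s₃). -/
def Svec (n : ℕ) : Fin 3 → Matrix (Fin n) (Fin n) ℂ := ![S1 n, S2 n, S3 n]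

/-- The highest weight state |j,j⟩ (index k = 0). -/
def hw (n : ℕ) : Fin n → ℂ := fun k => if (k : ℕ) = 0 then 1 else 0

/-- The rotation D(φ,θ,0) = e^{-iφ s₃} e^{-iθ s₂}. -/
def Dmat (n : ℕ) (φ θ : ℝ) : Matrix (Fin n) (Fin n) ℂ :=
  NormedSpace.exp ((-(φ : ℂ) * Complex.I) • S3 n) *
    NormedSpace.exp ((-(θ : ℂ) * Complex.I) • S2 n)

/-- The spin coherent state |x̂⟩ = D(φ,θ,0)|j,j⟩ with
x̂ = (sin θ cos φ, sin θ sin φ, cos θ). -/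
def coh (n : ℕ) (θ φ : ℝ) : Fin n → ℂ := (Dmat n φ θ).mulVec (hw n)

/-- The unit vector with polar angles (θ,φ). -/
def xhat (θ φ : ℝ) : Fin 3 → ℝ := ![Real.sin θ * Real.cos φ, Real.sin θ * Real.sin φ, Real.cos θ]

/-!
For a spinor `v ∈ ℂ²`, `spinorPow n v` is the image of `v ⊗ ⋯ ⊗ v` in the spin-`j` representation
(`n = 2j + 1`). On such vectors `s·c` acts as the derivative of `spinorPow n` in the direction
`(σ·c / 2) v`, so by uniqueness for linear ODEs `exp(β s·c)` maps `spinorPow n v` to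
`spinorPow n (exp(β σ·c / 2) v)`, and `exp(β σ·d / 2) = cosh(β/2) + sinh(β/2) σ·d` when `d·d = 1`.
Rotations and the thermal operator are of this kind, so `|x̂⟩ = spinorPow n v` for the Bloch
spinor `v` of `x̂`, `ρ^th |x̂⟩ = spinorPow n (cosh(β/2) v - sinh(β/2) (σ·t) v)`, and the Q-function
is `(⟨v|v⟩ cosh(β/2) - ⟨v|σ·t|v⟩ sinh(β/2))^(2j)` with `⟨v|v⟩ = 1`, `⟨v|σ·t|v⟩ = x̂·t`.
-/

open ComplexConjugate

theorem natCast_mul_pow_sub_one_mul {R : Type*} [Semiring R] (m : ℕ) (x : R) :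
    (m : R) * x ^ (m - 1) * x = m * x ^ m := by
  rcases m with _ | m
  · simp
  · rw [mul_assoc, Nat.add_sub_cancel, ← pow_succ]

theorem Fin.sum_ite_val_eq {M : Type*} [AddCommMonoid M] {n : ℕ} (m : ℕ) (f : Fin n → M) :
    ∑ j : Fin n, (if m = (j : ℕ) then f j else 0) = if h : m < n then f ⟨m, h⟩ else 0 := by
  split_ifs with h
  · simp_rw [show ∀ j : Fin n, m = (j : ℕ) ↔ ⟨m, h⟩ = j from fun j => by rw [Fin.ext_iff]]
    exact Finset.sum_ite_eq _ _ _ |>.trans (if_pos (Finset.mem_univ _))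
  · exact Finset.sum_eq_zero fun j _ => if_neg fun (hj : m = j) => h (hj ▸ j.isLt)

theorem Real.sqrt_natCast_mul_mul_sqrt {a b p q : ℕ} (h : p * a = q * b) :
    √((a * b : ℕ) : ℝ) * √(p : ℝ) = b * √(q : ℝ) := by
  rw [← Real.sqrt_mul (Nat.cast_nonneg _), ← Nat.cast_mul,
    show a * b * p = b ^ 2 * q by rw [mul_comm a, mul_assoc, mul_comm a, h]; ring, Nat.cast_mul,
    Real.sqrt_mul (by positivity), Nat.cast_pow, Real.sqrt_sq (Nat.cast_nonneg _)]

theorem Matrix.exp_smul_mulVec_eq_of_hasDerivAt {m 𝕜 : Type*} [Fintype m] [DecidableEq m]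
    [RCLike 𝕜] (M : Matrix m m 𝕜) {v : ℝ → m → 𝕜} (hv : ∀ u, HasDerivAt v (M *ᵥ v u) u)
    (β : ℝ) : NormedSpace.exp (β • M) *ᵥ v 0 = v β := by
  -- Any submultiplicative norm will do; the statement does not depend on it.
  let _ : NormedRing (Matrix m m 𝕜) := Matrix.linftyOpNormedRing
  let _ : NormedAlgebra ℝ (Matrix m m 𝕜) := Matrix.linftyOpNormedAlgebra
  let applyAt : Matrix m m 𝕜 →L[ℝ] m → 𝕜 := LinearMap.toContinuousLinearMap
    { toFun := fun A => A *ᵥ v 0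
      map_add' := fun A B => Matrix.add_mulVec A B (v 0)
      map_smul' := fun r A => Matrix.smul_mulVec r A (v 0) }
  have hexp : ∀ u, HasDerivAt (fun u : ℝ => NormedSpace.exp (u • M) *ᵥ v 0)
      (M *ᵥ (NormedSpace.exp (u • M) *ᵥ v 0)) u := fun u => by
    rw [Matrix.mulVec_mulVec]
    exact applyAt.hasFDerivAt.comp_hasDerivAt u (hasDerivAt_exp_smul_const' M u)
  have hM := (LinearMap.toContinuousLinearMap (Matrix.toLin' M)).lipschitz
  have := ODE_solution_unique_univ (v := fun _ => (M *ᵥ ·)) (s := fun _ => Set.univ) (t₀ := 0)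
    (fun _ => hM.lipschitzOnWith) (fun u => ⟨hexp u, trivial⟩) (fun u => ⟨hv u, trivial⟩)
    (by simp)
  exact congrFun this β

def spinorPow (n : ℕ) (v : Fin 2 → ℂ) : Fin n → ℂ := fun k =>
  (√((n - 1).choose k : ℝ) : ℂ) * v 0 ^ (n - 1 - k) * v 1 ^ (k : ℕ)

theorem Sp_apply (n : ℕ) (i j : Fin n) :
    Sp n i j = if (i : ℕ) + 1 = j then (√((j * (n - j) : ℕ) : ℝ) : ℂ) else 0 := by
  have hj : (j : ℕ) ≤ n := j.isLt.le
  simp only [Sp, mval, jr, Nat.cast_mul, Nat.cast_sub hj]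
  congr 4
  ring

theorem Sm_apply (n : ℕ) (i j : Fin n) :
    Sm n i j = if (j : ℕ) + 1 = i then (√((i * (n - i) : ℕ) : ℝ) : ℂ) else 0 := by
  rw [Sm, Matrix.conjTranspose_apply, Sp_apply]
  split_ifs <;> simp

theorem Sp_mulVec_spinorPow (n : ℕ) (v : Fin 2 → ℂ) (k : Fin n) :
    (Sp n *ᵥ spinorPow n v) k =
      ((n - 1 - k : ℕ) : ℂ) * (√((n - 1).choose k : ℝ) : ℂ) * v 0 ^ (n - 1 - k - 1) *
        v 1 ^ ((k : ℕ) + 1) := by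
  simp only [Matrix.mulVec, dotProduct, Sp_apply, ite_mul, zero_mul, Fin.sum_ite_val_eq]
  split_ifs with hk
  · have hsqrt := congrArg Complex.ofReal
      (Real.sqrt_natCast_mul_mul_sqrt (Nat.choose_succ_right_eq (n - 1) k))
    simp only [Complex.ofReal_mul, Complex.ofReal_natCast] at hsqrt
    dsimp only [spinorPow]
    rw [show n - ((k : ℕ) + 1) = n - 1 - k by omega,
      show n - 1 - ((k : ℕ) + 1) = n - 1 - k - 1 by omega]
    linear_combination (v 0 ^ (n - 1 - k - 1) * v 1 ^ ((k : ℕ) + 1)) * hsqrt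
  · rw [show n - 1 - (k : ℕ) = 0 by omega]
    simp

theorem Sm_mulVec_spinorPow (n : ℕ) (v : Fin 2 → ℂ) (k : Fin n) :
    (Sm n *ᵥ spinorPow n v) k =
      ((k : ℕ) : ℂ) * (√((n - 1).choose k : ℝ) : ℂ) * v 0 ^ (n - k) * v 1 ^ ((k : ℕ) - 1) := by
  rcases Nat.eq_zero_or_pos k with hk | hk
  · simp [Matrix.mulVec, dotProduct, Sm_apply, hk]
  simp only [Matrix.mulVec, dotProduct, Sm_apply, ite_mul, zero_mul]
  simp_rw [show ∀ j : Fin n, (j : ℕ) + 1 = k ↔ (k : ℕ) - 1 = j from fun j => by omega]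
  rw [Fin.sum_ite_val_eq, dif_pos (by omega)]
  have hchoose := Nat.choose_succ_right_eq (n - 1) (k - 1)
  rw [Nat.sub_add_cancel hk, show n - 1 - ((k : ℕ) - 1) = n - k by omega] at hchoose
  have hsqrt := congrArg Complex.ofReal (Real.sqrt_natCast_mul_mul_sqrt hchoose.symm)
  simp only [Complex.ofReal_mul, Complex.ofReal_natCast] at hsqrt
  dsimp only [spinorPow]
  rw [show n - 1 - ((k : ℕ) - 1) = n - k by omega, mul_comm (k : ℕ)]
  linear_combination (v 0 ^ (n - k) * v 1 ^ ((k : ℕ) - 1)) * hsqrt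

def spinDot (n : ℕ) (c : Fin 3 → ℂ) : Matrix (Fin n) (Fin n) ℂ := ∑ k, c k • Svec n k

theorem spinDot_eq_ladder (n : ℕ) (c : Fin 3 → ℂ) :
    spinDot n c = ((c 0 - I * c 1) / 2) • Sp n + ((c 0 + I * c 1) / 2) • Sm n +
      c 2 • S3 n := by
  ext i j
  simp [spinDot, Svec, S1, S2, Fin.sum_univ_three]
  ring

-- `σ · c` for the Pauli matrices `σ`
def pauliDot (c : Fin 3 → ℂ) : Matrix (Fin 2) (Fin 2) ℂ :=
  !![c 2, c 0 - I * c 1; c 0 + I * c 1, -c 2]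

theorem pauliDot_mulVec (c : Fin 3 → ℂ) (v : Fin 2 → ℂ) :
    pauliDot c *ᵥ v = ![c 2 * v 0 + (c 0 - I * c 1) * v 1,
      (c 0 + I * c 1) * v 0 - c 2 * v 1] := by
  ext i
  fin_cases i <;> simp [pauliDot, Matrix.mulVec, dotProduct, Fin.sum_univ_two, sub_eq_add_neg]

theorem pauliDot_smul (ω : ℂ) (d : Fin 3 → ℂ) : pauliDot (ω • d) = ω • pauliDot d := by
  ext i j
  fin_cases i <;> fin_cases j <;> simp [pauliDot] <;> ring

theorem pauliDot_mul_self (d : Fin 3 → ℂ) : pauliDot d * pauliDot d = (∑ k, d k ^ 2) • 1 := by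
  ext i j
  fin_cases i <;> fin_cases j <;> simp [pauliDot, Matrix.mul_apply, Fin.sum_univ_three] <;>
    ring_nf <;> simp [I_sq]

def spinorPowDeriv (n : ℕ) (v w : Fin 2 → ℂ) : Fin n → ℂ := fun k =>
  (√((n - 1).choose k : ℝ) : ℂ) *
    ((n - 1 - k : ℕ) * v 0 ^ (n - 1 - k - 1) * w 0 * v 1 ^ (k : ℕ) +
      v 0 ^ (n - 1 - k) * ((k : ℕ) * v 1 ^ ((k : ℕ) - 1) * w 1))

theorem hasDerivAt_spinorPow (n : ℕ) {v : ℝ → Fin 2 → ℂ} {v' : Fin 2 → ℂ} {u : ℝ}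
    (hv : HasDerivAt v v' u) :
    HasDerivAt (fun u => spinorPow n (v u)) (spinorPowDeriv n (v u) v') u := by
  refine hasDerivAt_pi.2 fun k => ?_
  have h := (((hasDerivAt_pi.1 hv 0).fun_pow (n - 1 - k)).const_mul
    (√((n - 1).choose k : ℝ) : ℂ)).fun_mul ((hasDerivAt_pi.1 hv 1).fun_pow k)
  exact h.congr_deriv (by simp only [spinorPowDeriv]; ring)

theorem spinDot_mulVec_spinorPow (n : ℕ) (c : Fin 3 → ℂ) (v : Fin 2 → ℂ) :
    spinDot n c *ᵥ spinorPow n v = spinorPowDeriv n v ((2⁻¹ : ℂ) • pauliDot c *ᵥ v) := by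
  funext k
  have hk : (k : ℕ) < n := k.isLt
  simp only [spinDot_eq_ladder, Matrix.add_mulVec, Matrix.smul_mulVec, Pi.add_apply,
    Pi.smul_apply, smul_eq_mul, Sp_mulVec_spinorPow, Sm_mulVec_spinorPow, S3,
    Matrix.mulVec_diagonal]
  have hmval : (mval n k : ℂ) = ((n - 1 - k : ℕ) - k) / 2 := by
    simp only [mval, jr]
    push_cast [Nat.cast_sub (by omega : (k : ℕ) ≤ n - 1), Nat.cast_sub (by omega : 1 ≤ n)]
    ring
  rw [hmval, show n - (k : ℕ) = n - 1 - k + 1 by omega]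
  simp only [spinorPowDeriv, spinorPow, pauliDot_mulVec, Pi.smul_apply, smul_eq_mul,
    Matrix.cons_val_zero, Matrix.cons_val_one]
  generalize n - 1 - (k : ℕ) = m
  -- `natCast_mul_pow_sub_one_mul` absorbs the truncated exponents `m - 1` and `k - 1`
  linear_combination (√((n - 1).choose k : ℝ) * v 0 ^ m * c 2 / 2 : ℂ) *
      natCast_mul_pow_sub_one_mul k (v 1) -
    (√((n - 1).choose k : ℝ) * v 1 ^ (k : ℕ) * c 2 / 2 : ℂ) * natCast_mul_pow_sub_one_mul m (v 0)

theorem exp_smul_spinDot_mulVec_spinorPow (n : ℕ) (c : Fin 3 → ℂ) {v : ℝ → Fin 2 → ℂ}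
    (hv : ∀ u, HasDerivAt v ((2⁻¹ : ℂ) • pauliDot c *ᵥ v u) u) (β : ℝ) :
    NormedSpace.exp (β • spinDot n c) *ᵥ spinorPow n (v 0) = spinorPow n (v β) :=
  Matrix.exp_smul_mulVec_eq_of_hasDerivAt (v := fun u => spinorPow n (v u)) _
    (fun u => by simpa only [spinDot_mulVec_spinorPow] using hasDerivAt_spinorPow n (hv u)) β

theorem exp_smul_spinDot_smul_mulVec_spinorPow (n : ℕ) {d : Fin 3 → ℂ} (hd : ∑ k, d k ^ 2 = 1)
    (ω : ℂ) (β : ℝ) (v : Fin 2 → ℂ) :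
    NormedSpace.exp (β • spinDot n (ω • d)) *ᵥ spinorPow n v =
      spinorPow n
        (Complex.cosh (ω * β / 2) • v + Complex.sinh (ω * β / 2) • pauliDot d *ᵥ v) := by
  have hσσ : pauliDot d *ᵥ (pauliDot d *ᵥ v) = v := by
    rw [Matrix.mulVec_mulVec, pauliDot_mul_self, hd, one_smul, Matrix.one_mulVec]
  have hangle (u : ℝ) : HasDerivAt (fun u : ℝ => ω * u / 2) (ω / 2) u := by
    simpa using (((hasDerivAt_id (u : ℂ)).const_mul ω).div_const 2).comp_ofReal
  have hv (u : ℝ) : HasDerivAt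
      (fun u : ℝ => Complex.cosh (ω * u / 2) • v + Complex.sinh (ω * u / 2) • pauliDot d *ᵥ v)
      ((2⁻¹ : ℂ) • pauliDot (ω • d) *ᵥ
        (Complex.cosh (ω * u / 2) • v + Complex.sinh (ω * u / 2) • pauliDot d *ᵥ v)) u := by
    refine ((((Complex.hasDerivAt_cosh _).comp u (hangle u)).smul_const v).fun_add
      (((Complex.hasDerivAt_sinh _).comp u (hangle u)).smul_const
        (pauliDot d *ᵥ v))).congr_deriv ?_
    simp only [pauliDot_smul, Matrix.smul_mulVec, Matrix.mulVec_add, Matrix.mulVec_smul, hσσ]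
    module
  simpa using exp_smul_spinDot_mulVec_spinorPow n (ω • d) hv β

theorem exp_neg_mul_I_smul_spinDot_mulVec_spinorPow (n : ℕ) {d : Fin 3 → ℂ}
    (hd : ∑ k, d k ^ 2 = 1) (α : ℝ) (v : Fin 2 → ℂ) :
    NormedSpace.exp ((-(α : ℂ) * I) • spinDot n d) *ᵥ spinorPow n v =
      spinorPow n (Complex.cos (α / 2) • v - (I * Complex.sin (α / 2)) • pauliDot d *ᵥ v) := by
  have hrot : (-(α : ℂ) * I) • spinDot n d = α • spinDot n ((-I) • d) := by
    simp only [spinDot, ← Complex.coe_smul, Finset.smul_sum, smul_smul, Pi.smul_apply,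
      smul_eq_mul]
    ring_nf
  have hangle : -I * α / 2 = -(α / 2 * I) := by ring
  rw [hrot, exp_smul_spinDot_smul_mulVec_spinorPow n hd, hangle, Complex.cosh_neg,
    Complex.sinh_neg, Complex.cosh_mul_I, Complex.sinh_mul_I, neg_smul, mul_comm, sub_eq_add_neg]

theorem exp_neg_smul_spinDot_mulVec_spinorPow (n : ℕ) {d : Fin 3 → ℂ} (hd : ∑ k, d k ^ 2 = 1)
    (β : ℝ) (v : Fin 2 → ℂ) :
    NormedSpace.exp ((-(β : ℂ)) • spinDot n d) *ᵥ spinorPow n v =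
      spinorPow n (Complex.cosh (β / 2) • v - Complex.sinh (β / 2) • pauliDot d *ᵥ v) := by
  have h := exp_smul_spinDot_smul_mulVec_spinorPow n hd 1 (-β) v
  rw [one_smul, ← Complex.coe_smul] at h
  simpa [neg_div, sub_eq_add_neg] using h

theorem star_spinorPow_dotProduct_spinorPow {n : ℕ} (hn : 0 < n) (v w : Fin 2 → ℂ) :
    star (spinorPow n v) ⬝ᵥ spinorPow n w = (star v ⬝ᵥ w) ^ (n - 1) := by
  obtain ⟨N, rfl⟩ : ∃ N, n = N + 1 := ⟨n - 1, by omega⟩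
  have hsq (k : ℕ) : (√(N.choose k : ℝ) : ℂ) * √(N.choose k : ℝ) = N.choose k := by
    rw [← Complex.ofReal_mul, Real.mul_self_sqrt (Nat.cast_nonneg _), Complex.ofReal_natCast]
  simp only [Nat.add_sub_cancel, dotProduct, Fin.sum_univ_two, Pi.star_apply,
    spinorPow, star_mul', star_pow, Complex.star_def, Complex.conj_ofReal]
  rw [Fin.sum_univ_eq_sum_range (fun k => (√(N.choose k : ℝ) : ℂ) * conj (v 0) ^ (N - k) *
      conj (v 1) ^ k * ((√(N.choose k : ℝ) : ℂ) * w 0 ^ (N - k) * w 1 ^ k)) (N + 1),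
    add_comm (conj (v 0) * w 0), add_pow]
  refine Finset.sum_congr rfl fun k _ => ?_
  linear_combination (conj (v 0) * w 0) ^ (N - k) * (conj (v 1) * w 1) ^ k * hsq k

-- `e^{-iφσ₃/2} e^{-iθσ₂/2} (1, 0)`, the spin-1/2 coherent state along `xhat θ φ`
def blochSpinor (θ φ : ℝ) : Fin 2 → ℂ :=
  ![(Real.cos (φ / 2) - I * Real.sin (φ / 2)) * Real.cos (θ / 2),
    (Real.cos (φ / 2) + I * Real.sin (φ / 2)) * Real.sin (θ / 2)]

theorem hw_eq_spinorPow (n : ℕ) : hw n = spinorPow n ![1, 0] := by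
  funext k
  by_cases hk : (k : ℕ) = 0 <;> simp [hw, spinorPow, hk]

theorem coh_eq_spinorPow_blochSpinor (n : ℕ) (θ φ : ℝ) :
    coh n θ φ = spinorPow n (blochSpinor θ φ) := by
  have hS2 : S2 n = spinDot n ![0, 1, 0] := by simp [spinDot, Svec, Fin.sum_univ_three]
  have hS3 : S3 n = spinDot n ![0, 0, 1] := by simp [spinDot, Svec, Fin.sum_univ_three]
  rw [coh, Dmat, ← Matrix.mulVec_mulVec, hw_eq_spinorPow, hS2, hS3,
    exp_neg_mul_I_smul_spinDot_mulVec_spinorPow n (by simp [Fin.sum_univ_three]),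
    exp_neg_mul_I_smul_spinDot_mulVec_spinorPow n (by simp [Fin.sum_univ_three]),
    pauliDot_mulVec, pauliDot_mulVec]
  congr 1
  ext i
  fin_cases i <;> simp [blochSpinor]
  · ring
  · linear_combination (-(Complex.cos (φ / 2) + I * Complex.sin (φ / 2)) *
      Complex.sin (θ / 2)) * I_sq

theorem star_blochSpinor_dotProduct_self (θ φ : ℝ) :
    star (blochSpinor θ φ) ⬝ᵥ blochSpinor θ φ = 1 := by
  have hφ : (Real.cos (φ / 2) : ℂ) ^ 2 + (Real.sin (φ / 2) : ℂ) ^ 2 = 1 := by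
    exact_mod_cast Real.cos_sq_add_sin_sq (φ / 2)
  have hθ : (Real.cos (θ / 2) : ℂ) ^ 2 + (Real.sin (θ / 2) : ℂ) ^ 2 = 1 := by
    exact_mod_cast Real.cos_sq_add_sin_sq (θ / 2)
  simp only [blochSpinor, dotProduct, Fin.sum_univ_two, Pi.star_apply, Matrix.cons_val_zero,
    Matrix.cons_val_one, Complex.star_def, map_mul, map_add, map_sub, Complex.conj_ofReal,
    Complex.conj_I]
  generalize (Real.cos (φ / 2) : ℂ) = a, (Real.sin (φ / 2) : ℂ) = b,
    (Real.cos (θ / 2) : ℂ) = p, (Real.sin (θ / 2) : ℂ) = q at *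
  linear_combination (-b ^ 2 * (p ^ 2 + q ^ 2)) * I_sq + (p ^ 2 + q ^ 2) * hφ + hθ

theorem star_blochSpinor_dotProduct_pauliDot (θ φ : ℝ) (c : Fin 3 → ℂ) :
    star (blochSpinor θ φ) ⬝ᵥ pauliDot c *ᵥ blochSpinor θ φ = ∑ k, xhat θ φ k * c k := by
  have hsθ : Real.sin θ = 2 * Real.sin (θ / 2) * Real.cos (θ / 2) := by
    rw [← Real.sin_two_mul]; ring_nf
  have hcθ : Real.cos θ = Real.cos (θ / 2) ^ 2 - Real.sin (θ / 2) ^ 2 := by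
    rw [← Real.cos_two_mul']; ring_nf
  have hsφ : Real.sin φ = 2 * Real.sin (φ / 2) * Real.cos (φ / 2) := by
    rw [← Real.sin_two_mul]; ring_nf
  have hcφ : Real.cos φ = Real.cos (φ / 2) ^ 2 - Real.sin (φ / 2) ^ 2 := by
    rw [← Real.cos_two_mul']; ring_nf
  have hφ : (Real.cos (φ / 2) : ℂ) ^ 2 + (Real.sin (φ / 2) : ℂ) ^ 2 = 1 := by
    exact_mod_cast Real.cos_sq_add_sin_sq (φ / 2)
  simp only [blochSpinor, xhat, dotProduct, Fin.sum_univ_two, Fin.sum_univ_three,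
    pauliDot_mulVec, Pi.star_apply, Matrix.cons_val_zero, Matrix.cons_val_one, Matrix.cons_val_two,
    Matrix.tail_cons, Matrix.head_cons, Complex.star_def, map_mul, map_add, map_sub,
    Complex.conj_ofReal, Complex.conj_I, hsθ, hcθ, hsφ, hcφ, Complex.ofReal_mul,
    Complex.ofReal_sub, Complex.ofReal_pow, Complex.ofReal_ofNat]
  generalize (Real.cos (φ / 2) : ℂ) = a, (Real.sin (φ / 2) : ℂ) = b,
    (Real.cos (θ / 2) : ℂ) = p, (Real.sin (θ / 2) : ℂ) = q at *
  linear_combination (-c 2 * (p ^ 2 - q ^ 2) * b ^ 2 + 2 * p * q * c 0 * b ^ 2 -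
    4 * p * q * c 1 * a * b) * I_sq + c 2 * (p ^ 2 - q ^ 2) * hφ

/-- The Q-function of the thermal operator:
⟨x̂| e^{-β t̂·s} |x̂⟩ = (cosh(β/2) - (x̂·t̂) sinh(β/2))^{2j}. -/
theorem stmt8 (n : ℕ) (hn : 0 < n) (β : ℝ) (t : Fin 3 → ℝ) (ht : ∑ k, (t k) ^ 2 = 1)
    (θ φ : ℝ) :
    star (coh n θ φ) ⬝ᵥ
      ((NormedSpace.exp ((-(β : ℂ)) • ∑ k, ((t k : ℝ) : ℂ) • Svec n k)).mulVec
        (coh n θ φ)) =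
    (((Real.cosh (β/2) - (∑ k, xhat θ φ k * t k) * Real.sinh (β/2)) ^ (n - 1) : ℝ) : ℂ) := by
  have ht' : ∑ k, ((t k : ℂ)) ^ 2 = 1 := by exact_mod_cast ht
  rw [coh_eq_spinorPow_blochSpinor, ← spinDot, exp_neg_smul_spinDot_mulVec_spinorPow n ht',
    star_spinorPow_dotProduct_spinorPow hn, dotProduct_sub, dotProduct_smul, dotProduct_smul,
    star_blochSpinor_dotProduct_self, star_blochSpinor_dotProduct_pauliDot]
  push_cast
  ring
end
end

section
/- Fix half-integer j and let μ be the probability measure on the unit sphere S² with density proportional to 1/(cosh(β/2) + (x̂·t̂) sinh(β/2))^{2j+2} with respect to the uniform measure. Then ((2j+1)/(4π))·c_j ∫_{S²} ⟨j,m| x̂⟩⟨x̂ |j,m'⟩ / Q_{j+1}(-x̂) d²x̂ = e^{-βm} δ_{mm'} for all m, m' ∈ {-j,…,j}, where t̂ = (0,0,1), Q_{j+1}(-x̂) = (cosh(β/2) + (x̂·t̂)sinh(β/2))^{2j+2}, and c_j is as in Eq. (6). -/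
open Matrix Complex Real

noncomputable section

/-- Coherent-state component ⟨j,m|x̂⟩ = C(2j,j-m)^{1/2} e^{-imφ}
cos^{j+m}(θ/2) sin^{j-m}(θ/2), where the index k corresponds to m = j-k,
so j+m = (n-1)-k and j-m = k. -/
def cohComp (n : ℕ) (k : Fin n) (θ φ : ℝ) : ℂ :=
  ((Real.sqrt (Nat.choose (n - 1) k) : ℝ) : ℂ) *
    Complex.exp (-Complex.I * (mval n k : ℂ) * (φ : ℂ)) *
    ((Real.cos (θ/2) : ℝ) : ℂ) ^ (n - 1 - (k : ℕ)) *
    ((Real.sin (θ/2) : ℝ) : ℂ) ^ (k : ℕ)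

/-- The normalization coefficient c_j of Eq. (6), with 2j+1 = n. -/
def cjNorm (n : ℕ) (β : ℝ) : ℝ :=
  2 * Real.sinh ((jr n + 1/2) * β) /
    (((Real.cosh (β/2) - Real.sinh (β/2)) ^ n)⁻¹ -
      ((Real.cosh (β/2) + Real.sinh (β/2)) ^ n)⁻¹)

/-!
The phases of `⟨j,m|x̂⟩⟨x̂|j,m'⟩` integrate over `φ` to `2π δ_{mm'}`. On the diagonal, put
`u = cos²(θ/2)`, `P = e^{β/2}`, `Q = e^{-β/2}`: then `sin θ dθ = -2 du` and
`cosh(β/2) + cos θ sinh(β/2) = P u + Q (1 - u)`, so the `θ`-integral is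
`2 C(2j, j-m) ∫₀¹ uᵖ (1-u)^q / (P u + Q (1-u))^{p+q+2} du` with `p = j+m`, `q = j-m`.
The projective substitution `v = P u / (P u + Q (1-u))` turns this into the Beta integral
`p! q! / (p+q+1)!` divided by `P^{p+1} Q^{q+1} = e^{βm}`. Finally `c_j = 1`: numerator and
denominator both equal `2 sinh((2j+1)β/2)`.
-/

theorem integral_pow_mul_one_sub_pow (p q : ℕ) :
    ∫ x in (0:ℝ)..1, x ^ p * (1 - x) ^ q =
      (p.factorial * q.factorial / (p + q + 1).factorial : ℝ) := by
  have hre (r : ℕ) : 0 < ((r : ℂ) + 1).re := by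
    rw [Complex.add_re, Complex.natCast_re, Complex.one_re]
    positivity
  have hbeta := Complex.betaIntegral_eq_Gamma_mul_div (p + 1) (q + 1) (hre p) (hre q)
  rw [Complex.Gamma_nat_eq_factorial, Complex.Gamma_nat_eq_factorial,
    show (p : ℂ) + 1 + (q + 1) = ((p + q + 1 : ℕ) : ℂ) + 1 by push_cast; ring,
    Complex.Gamma_nat_eq_factorial] at hbeta
  apply Complex.ofReal_injective
  rw [← intervalIntegral.integral_ofReal]
  push_cast
  rw [← hbeta, Complex.betaIntegral]
  refine intervalIntegral.integral_congr fun x _ => ?_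
  simp only [add_sub_cancel_right]
  norm_cast

theorem mul_add_mul_one_sub_pos {P Q u : ℝ} (hP : 0 < P) (hQ : 0 < Q)
    (hu : u ∈ Set.Icc (0:ℝ) 1) : 0 < P * u + Q * (1 - u) := by
  rcases hu.1.eq_or_lt with rfl | hu0
  · simpa using hQ
  · have := sub_nonneg.2 hu.2
    positivity

theorem integral_pow_mul_one_sub_pow_div_pow {P Q : ℝ} (hP : 0 < P) (hQ : 0 < Q) (p q : ℕ) :
    ∫ u in (0:ℝ)..1, u ^ p * (1 - u) ^ q / (P * u + Q * (1 - u)) ^ (p + q + 2) =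
      p.factorial * q.factorial / ((p + q + 1).factorial * P ^ (p + 1) * Q ^ (q + 1)) := by
  set D : ℝ → ℝ := fun u => P * u + Q * (1 - u)
  have hD : ∀ u ∈ Set.uIcc (0:ℝ) 1, 0 < D u := fun u hu =>
    mul_add_mul_one_sub_pos hP hQ (by rwa [Set.uIcc_of_le zero_le_one] at hu)
  have hderiv : ∀ u ∈ Set.uIcc (0:ℝ) 1,
      HasDerivAt (fun u => P * u / D u) (P * Q / D u ^ 2) u := by
    intro u hu
    have h := ((hasDerivAt_id u).const_mul P).div
      (((hasDerivAt_id u).const_mul P).add (((hasDerivAt_id u).const_sub 1).const_mul Q))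
      (hD u hu).ne'
    refine h.congr_deriv ?_
    simp only [D, id, Pi.add_apply]
    ring
  have hcont : ContinuousOn (fun u => P * Q / D u ^ 2) (Set.uIcc 0 1) :=
    continuousOn_const.div (by fun_prop) fun u hu => pow_ne_zero 2 (hD u hu).ne'
  have hsubst := intervalIntegral.integral_comp_mul_deriv hderiv hcont
    (g := fun v => v ^ p * (1 - v) ^ q) (by fun_prop)
  simp only [D, Function.comp, mul_zero, sub_zero, mul_one, sub_self, zero_add,
    add_zero, zero_div, div_self hP.ne', integral_pow_mul_one_sub_pow] at hsubst
  rw [mul_assoc, ← div_div, ← hsubst, ← intervalIntegral.integral_div]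
  refine intervalIntegral.integral_congr fun u hu => ?_
  have hDu := (hD u hu).ne'
  simp only [D] at hDu
  have hcompl : 1 - P * u / (P * u + Q * (1 - u)) = Q * (1 - u) / (P * u + Q * (1 - u)) := by
    field_simp; ring
  rw [hcompl]
  generalize P * u + Q * (1 - u) = E at hDu ⊢
  generalize 1 - u = w
  rw [div_pow, div_pow, mul_pow, mul_pow, pow_add, pow_add, pow_succ, pow_succ]
  field_simp
  ring

theorem hasDerivAt_cos_half_sq (θ : ℝ) :
    HasDerivAt (fun θ => Real.cos (θ / 2) ^ 2) (-Real.sin θ / 2) θ := by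
  refine (((hasDerivAt_id θ).div_const 2).cos.pow 2).congr_deriv ?_
  rw [show Real.sin θ = Real.sin (2 * (θ / 2)) by ring_nf, Real.sin_two_mul]
  simp only [id]
  ring

theorem integral_sin_mul_comp_cos_half_sq {g : ℝ → ℝ} (hg : ContinuousOn g (Set.Icc 0 1)) :
    ∫ θ in (0:ℝ)..π, Real.sin θ * g (Real.cos (θ / 2) ^ 2) = 2 * ∫ u in (0:ℝ)..1, g u := by
  have hsubst := intervalIntegral.integral_comp_mul_deriv' (a := 0) (b := π)
    (fun θ _ => hasDerivAt_cos_half_sq θ) (by fun_prop)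
    (hg.mono (Set.image_subset_iff.2 fun θ _ => ⟨sq_nonneg _, Real.cos_sq_le_one _⟩))
  simp only [Function.comp, zero_div, Real.cos_zero, one_pow, Real.cos_pi_div_two, ne_eq,
    OfNat.ofNat_ne_zero, not_false_eq_true, zero_pow] at hsubst
  calc ∫ θ in (0:ℝ)..π, Real.sin θ * g (Real.cos (θ / 2) ^ 2)
      = -2 * ∫ θ in (0:ℝ)..π, g (Real.cos (θ / 2) ^ 2) * (-Real.sin θ / 2) := by
        rw [← intervalIntegral.integral_const_mul]
        exact intervalIntegral.integral_congr fun θ _ => by ring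
    _ = 2 * ∫ u in (0:ℝ)..1, g u := by
        rw [hsubst, intervalIntegral.integral_symm]
        ring

theorem cosh_add_cos_mul_sinh (x θ : ℝ) :
    Real.cosh x + Real.cos θ * Real.sinh x =
      Real.exp x * Real.cos (θ / 2) ^ 2 + Real.exp (-x) * (1 - Real.cos (θ / 2) ^ 2) := by
  rw [Real.cos_sq, show 2 * (θ / 2) = θ by ring, Real.cosh_eq, Real.sinh_eq]
  ring

theorem integral_sin_div_pow_mul_cos_half_sq_pow (β : ℝ) (p q : ℕ) :
    ∫ θ in (0:ℝ)..π,
      Real.sin θ / (Real.cosh (β / 2) + Real.cos θ * Real.sinh (β / 2)) ^ (p + q + 2) *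
        ((Real.cos (θ / 2) ^ 2) ^ p * (1 - Real.cos (θ / 2) ^ 2) ^ q) =
      2 * p.factorial * q.factorial / (p + q + 1).factorial * Real.exp (-(β * ((p - q) / 2))) := by
  have hP := Real.exp_pos (β / 2)
  have hQ := Real.exp_pos (-(β / 2))
  set g : ℝ → ℝ := fun u => u ^ p * (1 - u) ^ q /
    (Real.exp (β / 2) * u + Real.exp (-(β / 2)) * (1 - u)) ^ (p + q + 2)
  have hg : ContinuousOn g (Set.Icc 0 1) :=
    ContinuousOn.div (by fun_prop) (by fun_prop) fun u hu =>
      pow_ne_zero _ (mul_add_mul_one_sub_pos hP hQ hu).ne'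
  calc _ = ∫ θ in (0:ℝ)..π, Real.sin θ * g (Real.cos (θ / 2) ^ 2) := by
        refine intervalIntegral.integral_congr fun θ _ => ?_
        simp only [g, cosh_add_cos_mul_sinh]
        ring
    _ = 2 * p.factorial * q.factorial / (p + q + 1).factorial /
          (Real.exp (β / 2) ^ (p + 1) * Real.exp (-(β / 2)) ^ (q + 1)) := by
        rw [integral_sin_mul_comp_cos_half_sq hg, integral_pow_mul_one_sub_pow_div_pow hP hQ]
        ring
    _ = _ := by
        rw [← Real.exp_nat_mul, ← Real.exp_nat_mul, ← Real.exp_add, div_eq_mul_inv _ (Real.exp _),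
          ← Real.exp_neg]
        push_cast
        ring_nf

theorem cjNorm_eq_one {n : ℕ} (hn : n ≠ 0) {β : ℝ} (hβ : β ≠ 0) : cjNorm n β = 1 := by
  have hy : (n : ℝ) * (β / 2) ≠ 0 := by positivity
  rw [cjNorm, jr, Real.cosh_sub_sinh, Real.cosh_add_sinh, ← Real.exp_nat_mul, ← Real.exp_nat_mul,
    ← Real.exp_neg, ← Real.exp_neg, show (((n : ℝ) - 1) / 2 + 1 / 2) * β = n * (β / 2) by ring,
    mul_neg, neg_neg,
    show Real.exp (n * (β / 2)) - Real.exp (-(n * (β / 2))) = 2 * Real.sinh (n * (β / 2)) by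
      rw [Real.sinh_eq]; ring]
  exact div_self (mul_ne_zero two_ne_zero (mt Real.sinh_eq_zero.1 hy))

theorem integral_exp_int_mul_I (m : ℤ) :
    ∫ φ in (0:ℝ)..2 * π, Complex.exp (m * φ * I) = if m = 0 then 2 * π else 0 := by
  split_ifs with hm
  · simp [hm]
  · have hc : (m : ℂ) * I ≠ 0 := mul_ne_zero (Int.cast_ne_zero.2 hm) I_ne_zero
    simp_rw [mul_right_comm _ _ I]
    rw [integral_exp_mul_complex hc]
    push_cast
    rw [show (m : ℂ) * I * (2 * π) = m * (2 * π * I) by ring, Complex.exp_int_mul_two_pi_mul_I]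
    simp

def cohAmp (n : ℕ) (k : Fin n) (θ : ℝ) : ℝ :=
  Real.sqrt (Nat.choose (n - 1) k) * Real.cos (θ / 2) ^ (n - 1 - (k : ℕ)) *
    Real.sin (θ / 2) ^ (k : ℕ)

theorem cohComp_eq (n : ℕ) (k : Fin n) (θ φ : ℝ) :
    cohComp n k θ φ = cohAmp n k θ * Complex.exp (-I * mval n k * φ) := by
  simp only [cohComp, cohAmp]
  push_cast
  ring

theorem cohComp_mul_star_cohComp (n : ℕ) (k k' : Fin n) (θ φ : ℝ) :
    cohComp n k θ φ * star (cohComp n k' θ φ) =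
      (cohAmp n k θ * cohAmp n k' θ : ℝ) * Complex.exp (((k : ℤ) - k' : ℤ) * φ * I) := by
  rw [cohComp_eq, cohComp_eq, star_mul', Complex.star_def, Complex.conj_ofReal,
    ← Complex.exp_conj, mul_mul_mul_comm, ← Complex.exp_add]
  push_cast
  congr 2
  simp only [map_mul, map_neg, Complex.conj_I, Complex.conj_ofReal, mval, jr]
  push_cast
  ring

theorem integral_ofReal_mul_cohComp_mul_star_cohComp (n : ℕ) (k k' : Fin n) (w θ : ℝ) :
    ∫ φ in (0:ℝ)..2 * π, (w : ℂ) * (cohComp n k θ φ * star (cohComp n k' θ φ)) =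
      if k = k' then ((2 * π * (w * cohAmp n k θ ^ 2) : ℝ) : ℂ) else 0 := by
  simp_rw [cohComp_mul_star_cohComp, ← mul_assoc]
  rw [intervalIntegral.integral_const_mul, integral_exp_int_mul_I]
  simp only [sub_eq_zero, Nat.cast_inj, Fin.val_inj]
  split_ifs with hkk
  · subst hkk
    push_cast
    ring
  · simp

theorem cohAmp_sq (n : ℕ) (k : Fin n) (θ : ℝ) :
    cohAmp n k θ ^ 2 = Nat.choose (n - 1) k * ((Real.cos (θ / 2) ^ 2) ^ (n - 1 - (k : ℕ)) *
      (1 - Real.cos (θ / 2) ^ 2) ^ (k : ℕ)) := by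
  rw [cohAmp, mul_pow, mul_pow, Real.sq_sqrt (Nat.cast_nonneg _), ← Real.sin_sq, ← pow_mul,
    ← pow_mul, ← pow_mul, ← pow_mul, mul_comm _ 2, mul_comm _ 2, mul_assoc]

theorem integral_sin_div_pow_mul_cohAmp_sq (n : ℕ) (k : Fin n) (β : ℝ) :
    ∫ θ in (0:ℝ)..π, Real.sin θ / (Real.cosh (β / 2) + Real.cos θ * Real.sinh (β / 2)) ^ (n + 1) *
      cohAmp n k θ ^ 2 = 2 / n * Real.exp (-(β * mval n k)) := by
  obtain ⟨p, hn⟩ := Nat.exists_eq_add_of_lt k.isLt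
  have hp : n - 1 - k = p := by omega
  have hexp : n + 1 = p + k + 2 := by omega
  have hchoose :
      (Nat.choose (n - 1) k : ℝ) * p.factorial * (k : ℕ).factorial = (n - 1).factorial := by
    rw [show n - 1 = p + k by omega]
    exact_mod_cast Nat.add_choose_mul_factorial_mul_factorial p k
  have hfact : ((p + k + 1).factorial : ℝ) = n * (n - 1).factorial := by
    rw [show p + k + 1 = n by omega]
    exact_mod_cast (Nat.mul_factorial_pred (Fin.pos k).ne').symm
  have hmval : mval n k = (p - (k : ℕ)) / 2 := by
    rw [mval, jr, show (n : ℝ) = k + p + 1 by exact_mod_cast hn]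
    ring
  simp_rw [cohAmp_sq, hp, hexp, mul_left_comm _ (Nat.choose _ _ : ℝ)]
  rw [intervalIntegral.integral_const_mul, integral_sin_div_pow_mul_cos_half_sq_pow, hfact, hmval,
    ← hchoose]
  have hC : (Nat.choose (n - 1) k : ℝ) ≠ 0 := by
    exact_mod_cast (Nat.choose_pos (by omega : (k : ℕ) ≤ n - 1)).ne'
  field_simp

theorem stmt19_general (n : ℕ) (β : ℝ) (hβ : 0 < β) :
    ∀ k k' : Fin n,
    ((n : ℂ) / (4 * Real.pi)) * (cjNorm n β : ℂ) *
      (∫ θ in (0:ℝ)..Real.pi, ∫ φ in (0:ℝ)..(2 * Real.pi),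
        ((Real.sin θ /
          (Real.cosh (β/2) + Real.cos θ * Real.sinh (β/2)) ^ (n + 1) : ℝ) : ℂ) *
          (cohComp n k θ φ * star (cohComp n k' θ φ))) =
    if k = k' then ((Real.exp (-(β * mval n k)) : ℝ) : ℂ) else 0 := by
  intro k k'
  simp only [integral_ofReal_mul_cohComp_mul_star_cohComp]
  rw [cjNorm_eq_one (Fin.pos k).ne' hβ.ne']
  by_cases hkk : k = k'
  · subst hkk
    simp only [↓reduceIte]
    rw [intervalIntegral.integral_ofReal, intervalIntegral.integral_const_mul,
      integral_sin_div_pow_mul_cohAmp_sq]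
    have hn : (n : ℂ) ≠ 0 := Nat.cast_ne_zero.2 (Fin.pos k).ne'
    push_cast
    field_simp
    norm_num
  · simp [hkk]

/-- Equation (7): with t̂ = (0,0,1) so that x̂·t̂ = cos θ and
Q_{j+1}(-x̂) = (cosh(β/2) + cos θ sinh(β/2))^{2j+2},
((2j+1)/(4π)) c_j ∫_{S²} ⟨j,m|x̂⟩⟨x̂|j,m'⟩ / Q_{j+1}(-x̂) d²x̂ = e^{-βm} δ_{mm'}. -/
theorem stmt19 (n : ℕ) (hn : 0 < n) (β : ℝ) (hβ : 0 < β) :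
    ∀ k k' : Fin n,
    ((n : ℂ) / (4 * Real.pi)) * (cjNorm n β : ℂ) *
      (∫ θ in (0:ℝ)..Real.pi, ∫ φ in (0:ℝ)..(2 * Real.pi),
        ((Real.sin θ /
          (Real.cosh (β/2) + Real.cos θ * Real.sinh (β/2)) ^ (n + 1) : ℝ) : ℂ) *
          (cohComp n k θ φ * star (cohComp n k' θ φ))) =
    if k = k' then ((Real.exp (-(β * mval n k)) : ℝ) : ℂ) else 0 :=
  stmt19_general n β hβ

end
end
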